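/- arXiv:2107.09952 — 3 statements merged into one kernel-verified Lean document; each statement's English description precedes it below -/
import Mathlib

section
/- Similarity is supermodular: for every function sim : α → α → ℝ with sim(p,q) ≥ 0 for all p, q, all finsets A ⊆ B of α, and every x ∉ B, it holds that f_sim(A ∪ {x}) − f_sim(A) ≤ f_sim(B ∪ {x}) − f_sim(B). -/
lemma marg {α : Type*} [DecidableEq α] (sim : α → α → ℝ) (S : Finset α) (x : α)
    (hx : x ∉ S) :
    (∑ p ∈ insert x S, ∑ q ∈ insert x S, sim p q) - (∑ p ∈ S, ∑ q ∈ S, sim p q)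
      = sim x x + ∑ p ∈ S, (sim x p + sim p x) := by
  rw [Finset.sum_insert hx, Finset.sum_insert hx]
  simp only [Finset.sum_add_distrib]
  have : ∀ p ∈ S, ∑ q ∈ insert x S, sim p q = sim p x + ∑ q ∈ S, sim p q := by
    intro p _; rw [Finset.sum_insert hx]
  rw [Finset.sum_congr rfl this, Finset.sum_add_distrib]
  ring

/-- Similarity `f_sim(P) = ∑_{p ∈ P} ∑_{q ∈ P} sim p q` is supermodular when `sim` is
nonnegative. -/
theorem similarity_supermodular {α : Type*} [DecidableEq α]
    (sim : α → α → ℝ) (hsim : ∀ p q, 0 ≤ sim p q)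
    (A B : Finset α) (hAB : A ⊆ B) (x : α) (hx : x ∉ B) :
    (∑ p ∈ insert x A, ∑ q ∈ insert x A, sim p q) - (∑ p ∈ A, ∑ q ∈ A, sim p q) ≤
      (∑ p ∈ insert x B, ∑ q ∈ insert x B, sim p q) - (∑ p ∈ B, ∑ q ∈ B, sim p q) := by
  rw [marg sim A x (fun h => hx (hAB h)), marg sim B x hx]
  have := Finset.sum_le_sum_of_subset_of_nonneg hAB
    (fun p _ _ => add_nonneg (hsim x p) (hsim p x) : ∀ p ∈ B, p ∉ A → 0 ≤ sim x p + sim p x)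
  linarith
end

section
/- Greedy recurrence lower bound: let γ be a natural number with γ ≥ 1, let s ∈ ℝ, and let a : ℕ → ℝ satisfy a(0) ≥ 0 and, for every i ≥ 1, a(i) ≥ a(i−1) + ((1 − 1/γ)^(i−1)·s − a(i−1))/γ. Then for every i ≥ 0, a(i) ≥ (i/γ)·(1 − 1/γ)^(i−1)·s. -/
/-- Greedy recurrence lower bound: if `a 0 ≥ 0` and
`a i ≥ a (i-1) + ((1 - 1/γ)^(i-1) · s - a (i-1)) / γ` for all `i ≥ 1`, then
`a i ≥ (i/γ) · (1 - 1/γ)^(i-1) · s` for all `i`. -/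
theorem greedy_recurrence_lower_bound (γ : ℕ) (hγ : 1 ≤ γ) (s : ℝ) (a : ℕ → ℝ)
    (h0 : 0 ≤ a 0)
    (hrec : ∀ i : ℕ, 1 ≤ i →
      a i ≥ a (i - 1) + ((1 - 1 / (γ : ℝ)) ^ (i - 1) * s - a (i - 1)) / (γ : ℝ)) :
    ∀ i : ℕ, a i ≥ ((i : ℝ) / (γ : ℝ)) * (1 - 1 / (γ : ℝ)) ^ (i - 1) * s := by
  have hγ0 : (0 : ℝ) < (γ : ℝ) := by exact_mod_cast hγ.trans_lt' (by norm_num)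
  have hg0 : (0 : ℝ) ≤ 1 - 1 / (γ : ℝ) := by
    rw [sub_nonneg]
    rw [div_le_one hγ0]
    exact_mod_cast hγ
  intro i
  induction i with
  | zero => simpa using h0
  | succ n ih =>
    have hr := hrec (n + 1) (by omega)
    simp only [Nat.add_sub_cancel] at hr
    have key : a n + ((1 - 1 / (γ : ℝ)) ^ n * s - a n) / (γ : ℝ)
        = a n * (1 - 1 / (γ : ℝ)) + (1 - 1 / (γ : ℝ)) ^ n * s / (γ : ℝ) := by
      field_simp
      ring
    rw [key] at hr
    refine hr.trans' ?_
    have h1 : ((n : ℝ) / (γ : ℝ)) * (1 - 1 / (γ : ℝ)) ^ (n - 1) * s * (1 - 1 / (γ : ℝ))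
        ≤ a n * (1 - 1 / (γ : ℝ)) := mul_le_mul_of_nonneg_right ih hg0
    have h2 : ((n : ℝ) / (γ : ℝ)) * (1 - 1 / (γ : ℝ)) ^ (n - 1) * s * (1 - 1 / (γ : ℝ))
        = ((n : ℝ) / (γ : ℝ)) * (1 - 1 / (γ : ℝ)) ^ n * s := by
      match n with
      | 0 => simp
      | m + 1 => simp only [Nat.add_sub_cancel, pow_succ]; ring
    rw [h2] at h1
    have heq : (((n : ℝ) + 1) / (γ : ℝ)) * (1 - 1 / (γ : ℝ)) ^ n * s
        = ((n : ℝ) / (γ : ℝ)) * (1 - 1 / (γ : ℝ)) ^ n * s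
          + (1 - 1 / (γ : ℝ)) ^ n * s / (γ : ℝ) := by ring
    simp only [Nat.add_sub_cancel]
    push_cast
    rw [heq]
    linarith
end

section
/- Deterministic core of the 1/e-approximation guarantee: let γ be a natural number with γ ≥ 1, let s ∈ ℝ with s ≥ 0, and let a : ℕ → ℝ satisfy a(0) ≥ 0 and, for every i ≥ 1, a(i) ≥ a(i−1) + ((1 − 1/γ)^(i−1)·s − a(i−1))/γ. Then a(γ) ≥ e^(−1)·s. -/
/-! With `q = 1 - 1/γ` the hypothesis reads `a (i+1) ≥ q · a i + (s/γ) · q^i`; starting from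
`a 0 ≥ 0` this linear recurrence forces `a i ≥ (i/γ) · q^(i-1) · s`, which at `i = γ` is
`q^(γ-1) · s`. Finally `q^(γ-1) = (1 + 1/(γ-1))^-(γ-1) ≥ e⁻¹`. -/

lemma Real.exp_neg_one_le_one_sub_inv_pow {n : ℕ} (hn : 1 ≤ n) :
    Real.exp (-1) ≤ (1 - 1 / (n : ℝ)) ^ (n - 1) := by
  obtain ⟨m, rfl⟩ := Nat.exists_eq_add_of_le' hn
  rcases Nat.eq_zero_or_pos m with rfl | hm
  · simp
  have hbase : 1 - 1 / ((m + 1 : ℕ) : ℝ) = (1 + (m : ℝ)⁻¹)⁻¹ := by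
    push_cast; field_simp; ring
  rw [Nat.add_sub_cancel, hbase, inv_pow, Real.exp_neg]
  exact inv_anti₀ (by positivity) Real.one_add_inv_pow_le_exp

lemma succ_mul_mul_pow_le_of_mul_add_mul_pow_le {q c : ℝ} {a : ℕ → ℝ} (hq : 0 ≤ q)
    (h0 : 0 ≤ a 0) (hrec : ∀ i, q * a i + c * q ^ i ≤ a (i + 1)) (i : ℕ) :
    (i + 1) * c * q ^ i ≤ a (i + 1) := by
  induction i with
  | zero => simpa using (le_add_of_nonneg_left (mul_nonneg hq h0)).trans (hrec 0)
  | succ i ih =>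
    calc ((i + 1 : ℕ) + 1) * c * q ^ (i + 1) = q * ((i + 1) * c * q ^ i) + c * q ^ (i + 1) := by
          push_cast; ring
      _ ≤ q * a (i + 1) + c * q ^ (i + 1) := by gcongr
      _ ≤ a (i + 1 + 1) := hrec (i + 1)

/-- Deterministic core of the `1/e`-approximation guarantee of the randomized greedy
pattern-selection algorithm: if `s ≥ 0`, `a 0 ≥ 0`, and
`a i ≥ a (i-1) + ((1 - 1/γ)^(i-1) · s - a (i-1)) / γ` for all `i ≥ 1`, then
`a γ ≥ e⁻¹ · s`. -/
theorem greedy_one_over_e_approx (γ : ℕ) (hγ : 1 ≤ γ) (s : ℝ) (hs : 0 ≤ s) (a : ℕ → ℝ)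
    (h0 : 0 ≤ a 0)
    (hrec : ∀ i : ℕ, 1 ≤ i →
      a i ≥ a (i - 1) + ((1 - 1 / (γ : ℝ)) ^ (i - 1) * s - a (i - 1)) / (γ : ℝ)) :
    a γ ≥ Real.exp (-1) * s := by
  set q := 1 - 1 / (γ : ℝ)
  have hγpos : (0 : ℝ) < γ := by exact_mod_cast hγ
  have hq : 0 ≤ q := sub_nonneg.2 ((div_le_one hγpos).2 (by exact_mod_cast hγ))
  have hstep (i : ℕ) : q * a i + s / γ * q ^ i ≤ a (i + 1) := by
    have h := hrec (i + 1) (Nat.le_add_left 1 i)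
    rw [Nat.add_sub_cancel] at h
    calc q * a i + s / γ * q ^ i = a i + (q ^ i * s - a i) / γ := by simp only [q]; field_simp; ring
      _ ≤ a (i + 1) := h
  calc Real.exp (-1) * s ≤ q ^ (γ - 1) * s :=
        mul_le_mul_of_nonneg_right (Real.exp_neg_one_le_one_sub_inv_pow hγ) hs
    _ = ((γ - 1 : ℕ) + 1) * (s / γ) * q ^ (γ - 1) := by
        rw [Nat.cast_sub hγ]; field_simp; ring
    _ ≤ a (γ - 1 + 1) := succ_mul_mul_pow_le_of_mul_add_mul_pow_le hq h0 hstep (γ - 1)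
    _ = a γ := by rw [Nat.sub_add_cancel hγ]
end
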